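/- arXiv:2309.16633 — 6 statements merged into one kernel-verified Lean document; each statement's English description precedes it below -/
import Mathlib

section
/- (Theorem 1, first part — positivity of the SupReMix gradient with respect to a negative-pair logit.) For every anchor a ∈ I and every l₀ ∈ J with l₀ ≠ a and ρ(l₀) ≠ ρ(a), the map t ↦ L(s updated so that the (a,l₀)-logit equals t) is differentiable at t = s_{a,l₀}, its derivative equals ((K_a − 1)/k_a) · w(ρ(a), ρ(l₀)) · exp(s_{a,l₀}/τ) / ( τ · Σ_{l ∈ J, l ≠ a} w(ρ(a), ρ(l)) · exp(s_{a,l}/τ) ), and this derivative is strictly positive. -/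
open scoped Classical BigOperators

/-!
Only row `a` of the logits involves `s (a, l₀)`. Since `l₀` is a negative of `a`, no positive
logit `s (a, j)` moves, so each of the `#P a = K a - 1` positive-pair terms of that row changes
only through its log-partition `log ∑_{l ≠ a} w (ρ a) (ρ l) · exp (s (a, l) / τ)`. The partial
derivative of a weighted log-sum-exp is the softmax weight of the coordinate divided by `τ`,
which is positive because the SupReMix weights are.
-/

open Finset Real Function

section LogSumExp

variable {ι : Type*} [DecidableEq ι] (c : ι → ℝ) (τ : ℝ) (S : Finset ι) (g : ι → ℝ) {l₀ : ι}

theorem hasDerivAt_sum_mul_exp_update (hl₀ : l₀ ∈ S) :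
    HasDerivAt (fun t => ∑ l ∈ S, c l * exp (update g l₀ t l / τ))
      (c l₀ * exp (g l₀ / τ) / τ) (g l₀) := by
  have hterm (l : ι) : HasDerivAt (fun t => c l * exp (update g l₀ t l / τ))
      (c l * (exp (g l / τ) * ((Pi.single l₀ 1 : ι → ℝ) l / τ))) (g l₀) := by
    simpa using
      ((hasDerivAt_pi.1 (hasDerivAt_update g l₀ (g l₀)) l).div_const τ).exp.const_mul (c l)
  refine (HasDerivAt.fun_sum (u := S) fun l _ => hterm l).congr_deriv ?_
  rw [sum_eq_single_of_mem l₀ hl₀ fun l _ hl => by simp [hl]]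
  simp [div_eq_mul_inv, mul_assoc]

theorem hasDerivAt_log_sum_mul_exp_update (hl₀ : l₀ ∈ S)
    (hZ : ∑ l ∈ S, c l * exp (g l / τ) ≠ 0) :
    HasDerivAt (fun t => log (∑ l ∈ S, c l * exp (update g l₀ t l / τ)))
      (c l₀ * exp (g l₀ / τ) / (τ * ∑ l ∈ S, c l * exp (g l / τ))) (g l₀) := by
  convert (hasDerivAt_sum_mul_exp_update c τ S g hl₀).log (by simpa using hZ) using 1
  rw [update_eq_self, div_div, mul_comm τ]

end LogSumExp

/-- The loss of one anchor with positives `P`, contrast set `S`, pair weights `c` and logits `g`. -/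
noncomputable def anchorLoss {ι : Type*} (c : ι → ℝ) (τ : ℝ) (S P : Finset ι) (g : ι → ℝ) : ℝ :=
  ∑ j ∈ P, (log (∑ l ∈ S, c l * exp (g l / τ)) - g j / τ)

theorem hasDerivAt_anchorLoss_update_of_notMem {ι : Type*} [DecidableEq ι] (c : ι → ℝ) (τ : ℝ)
    {S P : Finset ι} (g : ι → ℝ) {l₀ : ι} (hl₀S : l₀ ∈ S) (hl₀P : l₀ ∉ P)
    (hZ : ∑ l ∈ S, c l * exp (g l / τ) ≠ 0) :
    HasDerivAt (fun t => anchorLoss c τ S P (update g l₀ t))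
      (#P * (c l₀ * exp (g l₀ / τ) / (τ * ∑ l ∈ S, c l * exp (g l / τ)))) (g l₀) := by
  have hfixed (j : ι) (hj : j ∈ P) (t : ℝ) : update g l₀ t j = g j :=
    update_of_ne (ne_of_mem_of_not_mem hj hl₀P) _ _
  have := HasDerivAt.fun_sum (u := P) fun j _ =>
    (hasDerivAt_log_sum_mul_exp_update c τ S g hl₀S hZ).sub_const (g j / τ)
  rw [sum_const, nsmul_eq_mul] at this
  refine this.congr_of_eventuallyEq (Filter.Eventually.of_forall fun t => ?_)
  exact sum_congr rfl fun j hj => by rw [hfixed j hj]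

theorem hasDerivAt_sum_update_row {ι κ : Type*} [DecidableEq ι] [DecidableEq κ]
    (F : ι → (κ → ℝ) → ℝ) {I : Finset ι} (s : ι × κ → ℝ) {a : ι} (ha : a ∈ I) (l₀ : κ)
    {F' : ℝ} (hF : HasDerivAt (fun t => F a (update (fun l => s (a, l)) l₀ t)) F' (s (a, l₀))) :
    HasDerivAt (fun t => ∑ a' ∈ I, F a' (fun l => update s (a, l₀) t (a', l))) F'
      (s (a, l₀)) := by
  have hrow (a' : ι) (ha' : a' ≠ a) (t : ℝ) :
      (fun l => update s (a, l₀) t (a', l)) = fun l => s (a', l) :=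
    update_comp_eq_of_forall_ne' s t fun l h => ha' (Prod.ext_iff.1 h).1
  have hterm (a' : ι) : HasDerivAt (fun t => F a' (fun l => update s (a, l₀) t (a', l)))
      (if a' = a then F' else 0) (s (a, l₀)) := by
    split_ifs with h
    · subst h
      simpa only [update_comp_eq_of_injective' s (Prod.mk_right_injective a')] using hF
    · simpa only [hrow a' h] using hasDerivAt_const (s (a, l₀)) (F a' fun l => s (a', l))
  simpa [ha] using HasDerivAt.fun_sum (u := I) fun a' _ => hterm a'

theorem supremix_grad_positive_general
    {J : Type*} [Fintype J] [DecidableEq J]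
    (I : Finset J)
    (ρ : J → ℝ) (mmin mmax : ℝ) (hm : mmin < mmax)
    (τ : ℝ) (hτ : 0 < τ)
    (w : ℝ → ℝ → ℝ) (hw : ∀ m mbar, w m mbar = (1 + |m - mbar|) / (mmax - mmin))
    (k : J → ℕ) (hk : ∀ a, k a = (I.filter (fun b => ρ b = ρ a)).card)
    (P : J → Finset J) (hP : ∀ a j, j ∈ P a ↔ j ≠ a ∧ ρ j = ρ a)
    (K : J → ℕ) (hK : ∀ a, K a = (P a).card + 1)
    (hK2 : ∀ a ∈ I, 2 ≤ K a)
    (L : (J × J → ℝ) → ℝ)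
    (hL : ∀ s : J × J → ℝ, L s = ∑ a ∈ I, (1 / (k a : ℝ)) *
      ∑ j ∈ P a,
        (Real.log (∑ l ∈ Finset.univ.erase a, w (ρ a) (ρ l) * Real.exp (s (a, l) / τ))
          - s (a, j) / τ))
    (s : J × J → ℝ) (a : J) (ha : a ∈ I) (l₀ : J) (hl₀a : l₀ ≠ a) (hρ : ρ l₀ ≠ ρ a) :
    HasDerivAt (fun t => L (Function.update s (a, l₀) t))
      (((K a : ℝ) - 1) / (k a : ℝ) * w (ρ a) (ρ l₀) * Real.exp (s (a, l₀) / τ) /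
        (τ * ∑ l ∈ Finset.univ.erase a, w (ρ a) (ρ l) * Real.exp (s (a, l) / τ)))
      (s (a, l₀))
    ∧ 0 < ((K a : ℝ) - 1) / (k a : ℝ) * w (ρ a) (ρ l₀) * Real.exp (s (a, l₀) / τ) /
        (τ * ∑ l ∈ Finset.univ.erase a, w (ρ a) (ρ l) * Real.exp (s (a, l) / τ)) := by
  have hw_pos (m m' : ℝ) : 0 < w m m' := by
    rw [hw]; exact div_pos (by positivity) (sub_pos.2 hm)
  have hl₀_mem : l₀ ∈ univ.erase a := mem_erase.2 ⟨hl₀a, mem_univ _⟩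
  have hZ_pos : 0 < ∑ l ∈ univ.erase a, w (ρ a) (ρ l) * exp (s (a, l) / τ) :=
    sum_pos (fun l _ => mul_pos (hw_pos _ _) (exp_pos _)) ⟨l₀, hl₀_mem⟩
  have hK_sub : (K a : ℝ) - 1 = #(P a) := by rw [hK]; push_cast; ring
  have hloss : (fun t => L (update s (a, l₀) t)) = fun t => ∑ a' ∈ I, (1 / (k a' : ℝ)) *
      anchorLoss (fun l => w (ρ a') (ρ l)) τ (univ.erase a') (P a')
        (fun l => update s (a, l₀) t (a', l)) :=
    funext fun t => hL _
  refine ⟨?_, ?_⟩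
  · rw [hloss, hK_sub]
    refine (hasDerivAt_sum_update_row (fun a' g => 1 / (k a' : ℝ) *
      anchorLoss (fun l => w (ρ a') (ρ l)) τ (univ.erase a') (P a') g) s ha l₀
      ((hasDerivAt_anchorLoss_update_of_notMem _ τ _ hl₀_mem (fun h => hρ ((hP a l₀).1 h).2)
        hZ_pos.ne').const_mul (1 / (k a : ℝ)))).congr_deriv ?_
    ring
  · have hk_pos : 0 < (k a : ℝ) := by
      rw [hk]; exact_mod_cast card_pos.2 ⟨a, by simp [ha]⟩
    have hK_pos : 0 < (K a : ℝ) - 1 := by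
      have := hK2 a ha; rw [sub_pos]; exact_mod_cast this
    exact div_pos (mul_pos (mul_pos (div_pos hK_pos hk_pos) (hw_pos _ _)) (exp_pos _))
      (mul_pos hτ hZ_pos)

/-- **Theorem 1, first part (SupReMix gradient positivity).**
For every anchor `a ∈ I` and every `l₀ ∈ J` with `l₀ ≠ a` and `ρ l₀ ≠ ρ a`, the map
`t ↦ L (s updated so that the (a,l₀)-logit equals t)` is differentiable at `t = s (a,l₀)`,
its derivative equals
`((K a − 1)/k a) · w (ρ a) (ρ l₀) · exp(s (a,l₀)/τ) / (τ · Σ_{l ≠ a} w (ρ a) (ρ l) · exp(s (a,l)/τ))`,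
and this derivative is strictly positive. -/
theorem supremix_grad_positive
    {J : Type*} [Fintype J] [DecidableEq J]
    (I : Finset J) (hI : I.Nonempty)
    (ρ : J → ℝ) (mmin mmax : ℝ) (hm : mmin < mmax)
    (τ : ℝ) (hτ : 0 < τ)
    (w : ℝ → ℝ → ℝ) (hw : ∀ m mbar, w m mbar = (1 + |m - mbar|) / (mmax - mmin))
    (k : J → ℕ) (hk : ∀ a, k a = (I.filter (fun b => ρ b = ρ a)).card)
    (P : J → Finset J) (hP : ∀ a j, j ∈ P a ↔ j ≠ a ∧ ρ j = ρ a)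
    (K : J → ℕ) (hK : ∀ a, K a = (P a).card + 1)
    (hK2 : ∀ a ∈ I, 2 ≤ K a)
    (L : (J × J → ℝ) → ℝ)
    (hL : ∀ s : J × J → ℝ, L s = ∑ a ∈ I, (1 / (k a : ℝ)) *
      ∑ j ∈ P a,
        (Real.log (∑ l ∈ Finset.univ.erase a, w (ρ a) (ρ l) * Real.exp (s (a, l) / τ))
          - s (a, j) / τ))
    (s : J × J → ℝ) (a : J) (ha : a ∈ I) (l₀ : J) (hl₀a : l₀ ≠ a) (hρ : ρ l₀ ≠ ρ a) :
    HasDerivAt (fun t => L (Function.update s (a, l₀) t))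
      (((K a : ℝ) - 1) / (k a : ℝ) * w (ρ a) (ρ l₀) * Real.exp (s (a, l₀) / τ) /
        (τ * ∑ l ∈ Finset.univ.erase a, w (ρ a) (ρ l) * Real.exp (s (a, l) / τ)))
      (s (a, l₀))
    ∧ 0 < ((K a : ℝ) - 1) / (k a : ℝ) * w (ρ a) (ρ l₀) * Real.exp (s (a, l₀) / τ) /
        (τ * ∑ l ∈ Finset.univ.erase a, w (ρ a) (ρ l) * Real.exp (s (a, l) / τ)) :=
  supremix_grad_positive_general I ρ mmin mmax hm τ hτ w hw k hk P hP K hK hK2 L hL s a ha l₀ hl₀a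
    hρ
end

section
/- (Consequence of distance magnifying: farther negatives are penalized more at equal similarity.) Fix an anchor a ∈ I and two contrast elements l, l' ∈ J \ {a} with ρ(l) ≠ ρ(a), ρ(l') ≠ ρ(a), and |ρ(a) − ρ(l)| > |ρ(a) − ρ(l')|. If the logits are equal, s_{a,l} = s_{a,l'}, then the partial derivative of the SupReMix loss L with respect to s_{a,l} is strictly greater than its partial derivative with respect to s_{a,l'}. -/
open scoped Classical BigOperators

/-!
Differentiating the loss in the single logit `s (a, x)` gives the softmax gradient
`(1 / k a) * (#(P a) * w (ρ a) (ρ x) * exp (s (a, x) / τ) / (τ * Z) - [x ∈ P a] / τ)`,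
where `Z` is the weighted partition function of the anchor `a`. A negative `l` contributes no
second term, and at equal logits the first term is proportional to the weight, which increases
with the label distance `|ρ a - ρ x|`.
-/

open Finset Function Real

section Gradient

variable {ι : Type*} [DecidableEq ι]

theorem hasDerivAt_update_apply (r : ι → ℝ) (x j : ι) (u : ℝ) :
    HasDerivAt (fun t => update r x t j) (if j = x then 1 else 0) u := by
  rcases eq_or_ne j x with rfl | hjx
  · simp only [update_self, if_true]
    exact hasDerivAt_id' u
  · simp only [update_of_ne hjx, if_neg hjx]
    exact hasDerivAt_const u (r j)

theorem hasDerivAt_log_sum_exp_update (S : Finset ι) (v r : ι → ℝ) (τ : ℝ) (x : ι)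
    (hZ : ∑ m ∈ S, v m * exp (r m / τ) ≠ 0) :
    HasDerivAt (fun t => log (∑ m ∈ S, v m * exp (update r x t m / τ)))
      ((if x ∈ S then v x * exp (r x / τ) else 0) / τ / ∑ m ∈ S, v m * exp (r m / τ))
      (r x) := by
  have hterm : ∀ m ∈ S, HasDerivAt (fun t => v m * exp (update r x t m / τ))
      (v m * (exp (r m / τ) * ((if m = x then 1 else 0) / τ))) (r x) := fun m _ => by
    simpa only [update_eq_self] using
      (((hasDerivAt_update_apply r x m (r x)).div_const τ).exp).const_mul (v m)
  refine ((HasDerivAt.fun_sum hterm).log (by simpa only [update_eq_self] using hZ)).congr_deriv ?_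
  simp only [update_eq_self, mul_div_assoc', mul_ite, mul_one, mul_zero, zero_div, ite_div]
  rw [Finset.sum_ite_eq', ite_div, zero_div]

theorem hasDerivAt_anchor_loss_update (S P : Finset ι) (v r : ι → ℝ) (τ c : ℝ) (x : ι)
    (hZ : ∑ m ∈ S, v m * exp (r m / τ) ≠ 0) :
    HasDerivAt
      (fun t => c * ∑ j ∈ P, (log (∑ m ∈ S, v m * exp (update r x t m / τ)) - update r x t j / τ))
      (c * (#P * ((if x ∈ S then v x * exp (r x / τ) else 0) / τ /
          ∑ m ∈ S, v m * exp (r m / τ)) - (if x ∈ P then 1 else 0) / τ))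
      (r x) := by
  have hterm : ∀ j ∈ P, HasDerivAt
      (fun t => log (∑ m ∈ S, v m * exp (update r x t m / τ)) - update r x t j / τ)
      ((if x ∈ S then v x * exp (r x / τ) else 0) / τ / ∑ m ∈ S, v m * exp (r m / τ)
        - (if j = x then 1 else 0) / τ) (r x) := fun j _ =>
    (hasDerivAt_log_sum_exp_update S v r τ x hZ).sub
      ((hasDerivAt_update_apply r x j (r x)).div_const τ)
  refine ((HasDerivAt.fun_sum hterm).const_mul c).congr_deriv ?_
  rw [sum_sub_distrib, sum_const, nsmul_eq_mul, ← sum_div, sum_ite_eq']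

end Gradient

theorem hasDerivAt_sum_rows_update {α β : Type*} [DecidableEq α] [DecidableEq β]
    (I : Finset α) (F : α → (β → ℝ) → ℝ) (s : α × β → ℝ) {a : α} (ha : a ∈ I) (x : β) {D : ℝ}
    (h : HasDerivAt (fun t => F a (update (fun m => s (a, m)) x t)) D (s (a, x))) :
    HasDerivAt (fun t => ∑ b ∈ I, F b (fun m => update s (a, x) t (b, m))) D (s (a, x)) := by
  have hsplit : (fun t => ∑ b ∈ I, F b (fun m => update s (a, x) t (b, m))) =
      fun t => F a (update (fun m => s (a, m)) x t) + ∑ b ∈ I.erase a, F b (fun m => s (b, m)) := by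
    funext t
    rw [← add_sum_erase _ _ ha, update_comp_eq_of_injective' s (Prod.mk_right_injective a)]
    congr 1
    refine sum_congr rfl fun b hb => ?_
    rw [update_comp_eq_of_forall_ne' s t fun m hm => ne_of_mem_erase hb (congrArg Prod.fst hm)]
  rw [hsplit]
  exact h.add_const _

theorem hasDerivAt_contrastive_loss_update {α : Type*} [DecidableEq α]
    (I : Finset α) (S P : α → Finset α) (c : α → ℝ) (v : α → α → ℝ) (τ : ℝ) (s : α × α → ℝ)
    {a : α} (ha : a ∈ I) (x : α) (hZ : ∑ m ∈ S a, v a m * exp (s (a, m) / τ) ≠ 0) :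
    HasDerivAt
      (fun t => ∑ b ∈ I, c b * ∑ j ∈ P b,
        (log (∑ m ∈ S b, v b m * exp (update s (a, x) t (b, m) / τ)) - update s (a, x) t (b, j) / τ))
      (c a * (#(P a) * ((if x ∈ S a then v a x * exp (s (a, x) / τ) else 0) / τ /
          ∑ m ∈ S a, v a m * exp (s (a, m) / τ)) - (if x ∈ P a then 1 else 0) / τ))
      (s (a, x)) :=
  hasDerivAt_sum_rows_update I
    (fun b r => c b * ∑ j ∈ P b, (log (∑ m ∈ S b, v b m * exp (r m / τ)) - r j / τ)) s ha x
    (hasDerivAt_anchor_loss_update (S a) (P a) (v a) (fun m => s (a, m)) τ (c a) x hZ)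

theorem supremix_farther_negative_larger_gradient_general
    {J : Type*} [Fintype J] [DecidableEq J]
    (I : Finset J) (ρ : J → ℝ) (mmin mmax : ℝ) (hm : mmin < mmax)
    (τ : ℝ) (hτ : 0 < τ)
    (w : ℝ → ℝ → ℝ) (hw : ∀ m mbar, w m mbar = (1 + |m - mbar|) / (mmax - mmin))
    (k : J → ℕ) (hk : ∀ a, k a = (I.filter (fun b => ρ b = ρ a)).card)
    (P : J → Finset J) (hP : ∀ a j, j ∈ P a ↔ j ≠ a ∧ ρ j = ρ a)
    (K : J → ℕ) (hK : ∀ a, K a = (P a).card + 1)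
    (hK2 : ∀ a ∈ I, 2 ≤ K a)
    (L : (J × J → ℝ) → ℝ)
    (hL : ∀ s : J × J → ℝ, L s = ∑ a ∈ I, (1 / (k a : ℝ)) *
      ∑ j ∈ P a,
        (Real.log (∑ l ∈ Finset.univ.erase a, w (ρ a) (ρ l) * Real.exp (s (a, l) / τ))
          - s (a, j) / τ))
    (s : J × J → ℝ) (a : J) (ha : a ∈ I)
    (l l' : J) (hfar : |ρ a - ρ l'| < |ρ a - ρ l|)
    (heq : s (a, l) = s (a, l'))
    (D₁ D₂ : ℝ)
    (hD₁ : HasDerivAt (fun u => L (Function.update s (a, l) u)) D₁ (s (a, l)))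
    (hD₂ : HasDerivAt (fun u => L (Function.update s (a, l') u)) D₂ (s (a, l'))) :
    D₂ < D₁ := by
  have hρl : ρ l ≠ ρ a := fun h => (abs_nonneg _).not_gt (by simpa [h] using hfar)
  have hspan : 0 < mmax - mmin := sub_pos.2 hm
  have hw_pos : ∀ m, 0 < w (ρ a) m := fun m => by
    rw [hw]
    positivity
  have hw_lt : w (ρ a) (ρ l') < w (ρ a) (ρ l) := by
    rw [hw, hw]
    gcongr
  have hl_mem : l ∈ univ.erase a := mem_erase.2 ⟨fun h => hρl (h ▸ rfl), mem_univ l⟩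
  have hZ : 0 < ∑ m ∈ univ.erase a, w (ρ a) (ρ m) * exp (s (a, m) / τ) :=
    sum_pos (fun m _ => mul_pos (hw_pos _) (exp_pos _)) ⟨l, hl_mem⟩
  have hk_pos : (0 : ℝ) < k a := Nat.cast_pos.2 (hk a ▸ card_pos.2 ⟨a, by simp [ha]⟩)
  have hP_pos : (0 : ℝ) < #(P a) := Nat.cast_pos.2 (by have := hK a ▸ hK2 a ha; omega)
  have hgrad := fun x => hasDerivAt_contrastive_loss_update I (fun b => univ.erase b) P
    (fun b => 1 / (k b : ℝ)) (fun b m => w (ρ b) (ρ m)) τ s ha x hZ.ne'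
  simp only [hL] at hD₁ hD₂
  rw [hD₁.unique (hgrad l), hD₂.unique (hgrad l'), if_pos hl_mem,
    if_neg fun h => hρl ((hP a l).1 h).2, heq, zero_div, sub_zero]
  refine mul_lt_mul_of_pos_left ((sub_le_self _ ?_).trans_lt ?_) (by positivity)
  · split_ifs <;> positivity
  · gcongr
    split_ifs
    · exact mul_lt_mul_of_pos_right hw_lt (exp_pos _)
    · exact mul_pos (hw_pos _) (exp_pos _)

/-- **Consequence of distance magnifying: farther negatives are penalized more at equal
similarity.** For an anchor `a ∈ I` and contrast elements `l, l' ≠ a` with `ρ l ≠ ρ a`,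
`ρ l' ≠ ρ a` and `|ρ a − ρ l| > |ρ a − ρ l'|`, if the logits are equal, `s (a,l) = s (a,l')`,
then the partial derivative of the SupReMix loss with respect to `s (a,l)` is strictly greater
than its partial derivative with respect to `s (a,l')`. -/
theorem supremix_farther_negative_larger_gradient
    {J : Type*} [Fintype J] [DecidableEq J]
    (I : Finset J) (hI : I.Nonempty)
    (ρ : J → ℝ) (mmin mmax : ℝ) (hm : mmin < mmax)
    (τ : ℝ) (hτ : 0 < τ)
    (w : ℝ → ℝ → ℝ) (hw : ∀ m mbar, w m mbar = (1 + |m - mbar|) / (mmax - mmin))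
    (k : J → ℕ) (hk : ∀ a, k a = (I.filter (fun b => ρ b = ρ a)).card)
    (P : J → Finset J) (hP : ∀ a j, j ∈ P a ↔ j ≠ a ∧ ρ j = ρ a)
    (K : J → ℕ) (hK : ∀ a, K a = (P a).card + 1)
    (hK2 : ∀ a ∈ I, 2 ≤ K a)
    (L : (J × J → ℝ) → ℝ)
    (hL : ∀ s : J × J → ℝ, L s = ∑ a ∈ I, (1 / (k a : ℝ)) *
      ∑ j ∈ P a,
        (Real.log (∑ l ∈ Finset.univ.erase a, w (ρ a) (ρ l) * Real.exp (s (a, l) / τ))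
          - s (a, j) / τ))
    (s : J × J → ℝ) (a : J) (ha : a ∈ I)
    (l l' : J) (hla : l ≠ a) (hl'a : l' ≠ a)
    (hρl : ρ l ≠ ρ a) (hρl' : ρ l' ≠ ρ a)
    (hfar : |ρ a - ρ l'| < |ρ a - ρ l|)
    (heq : s (a, l) = s (a, l'))
    (D₁ D₂ : ℝ)
    (hD₁ : HasDerivAt (fun u => L (Function.update s (a, l) u)) D₁ (s (a, l)))
    (hD₂ : HasDerivAt (fun u => L (Function.update s (a, l') u)) D₂ (s (a, l'))) :
    D₂ < D₁ :=
  supremix_farther_negative_larger_gradient_general I ρ mmin mmax hm τ hτ w hw k hk P hP K hK hK2 L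
    hL s a ha l l' hfar heq D₁ D₂ hD₁ hD₂
end

section
/- (Lemma 1 — lower bound for the SupReMix loss.) For every choice of unit-norm embeddings z : J → ℝ^d and every temperature τ > 0, the SupReMix loss satisfies L ≥ L*, where L* = Σ_{a ∈ I} (1/k_a)·(K_a − 1)·log( (K_a − 1)/(m_max − m_min) ). -/
open scoped Classical BigOperators RealInnerProductSpace

/-!
Fix an anchor `a` with positives `P a`, `n = #(P a)`, and write `s_l = ⟪z a, z l⟫ / τ`.
The weight of a positive is exactly `1 / (m_max - m_min)`, and all other weights are nonnegative,
so the partition function of `a` is at least `(∑_{l ∈ P a} exp s_l) / (m_max - m_min)`.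
Jensen's inequality for `exp` bounds the log-sum-exp over `P a` from below by `log n` plus the
mean of the `s_l`, so the `n` summands of `a` add up to at least `n · log (n / (m_max - m_min))`.
-/

open Finset Real

theorem card_mul_log_card_le_sum_log_sum_exp_sub {ι : Type*} {s : Finset ι} (hs : s.Nonempty)
    (f : ι → ℝ) :
    #s * log #s ≤ ∑ j ∈ s, (log (∑ l ∈ s, exp (f l)) - f j) := by
  have hn : (0 : ℝ) < #s := by exact_mod_cast hs.card_pos
  have hT : 0 < ∑ l ∈ s, exp (f l) := sum_pos (fun _ _ => exp_pos _) hs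
  have jensen : exp (∑ l ∈ s, (#s : ℝ)⁻¹ • f l) ≤ ∑ l ∈ s, (#s : ℝ)⁻¹ • exp (f l) :=
    convexOn_exp.map_sum_le (fun _ _ => by positivity) (by simp [hn.ne'])
      (fun _ _ => Set.mem_univ _)
  simp only [smul_eq_mul, ← mul_sum] at jensen
  have hmean : (#s : ℝ)⁻¹ * ∑ l ∈ s, f l ≤ log (∑ l ∈ s, exp (f l)) - log #s := by
    rw [← log_exp (_ * _), sub_eq_neg_add, ← log_inv, ← log_mul (by positivity) hT.ne']
    exact log_le_log (exp_pos _) jensen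
  have hsum := mul_le_mul_of_nonneg_left hmean hn.le
  rw [← mul_assoc, mul_inv_cancel₀ hn.ne', one_mul] at hsum
  rw [sum_sub_distrib, sum_const, nsmul_eq_mul]
  linarith

theorem card_mul_log_card_div_le_sum_log_sum_mul_exp_sub {ι : Type*} {s t : Finset ι}
    (hs : s.Nonempty) (hst : s ⊆ t) {c : ℝ} (hc : 0 < c) {w : ι → ℝ}
    (hw : ∀ l ∈ t, 0 ≤ w l) (hws : ∀ l ∈ s, w l = c⁻¹) (f : ι → ℝ) :
    #s * log (#s / c) ≤ ∑ j ∈ s, (log (∑ l ∈ t, w l * exp (f l)) - f j) := by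
  have hn : (0 : ℝ) < #s := by exact_mod_cast hs.card_pos
  have hT : 0 < ∑ l ∈ s, exp (f l) := sum_pos (fun _ _ => exp_pos _) hs
  have hpositives : c⁻¹ * ∑ l ∈ s, exp (f l) ≤ ∑ l ∈ t, w l * exp (f l) := by
    rw [mul_sum, ← sum_congr rfl fun l hl => congrArg (· * exp (f l)) (hws l hl)]
    exact sum_le_sum_of_subset_of_nonneg hst fun l hl _ => mul_nonneg (hw l hl) (exp_pos _).le
  calc (#s : ℝ) * log (#s / c) = #s * log #s - #s * log c := by
        rw [log_div hn.ne' hc.ne']; ring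
    _ ≤ ∑ j ∈ s, (log (∑ l ∈ s, exp (f l)) - f j) - #s * log c := by
        gcongr; exact card_mul_log_card_le_sum_log_sum_exp_sub hs f
    _ = ∑ j ∈ s, (log (c⁻¹ * ∑ l ∈ s, exp (f l)) - f j) := by
        rw [log_mul (inv_pos.mpr hc).ne' hT.ne', log_inv]
        simp only [sum_sub_distrib, sum_add_distrib, sum_const, nsmul_eq_mul]
        ring
    _ ≤ ∑ j ∈ s, (log (∑ l ∈ t, w l * exp (f l)) - f j) := by
        gcongr

theorem supremix_lower_bound_general
    {J : Type*} [Fintype J] [DecidableEq J] {d : ℕ}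
    (I : Finset J)
    (ρ : J → ℝ) (mmin mmax : ℝ) (hm : mmin < mmax)
    (τ : ℝ)
    (z : J → EuclideanSpace ℝ (Fin d))
    (w : ℝ → ℝ → ℝ) (hw : ∀ m mbar, w m mbar = (1 + |m - mbar|) / (mmax - mmin))
    (k : J → ℕ)
    (P : J → Finset J) (hP : ∀ a j, j ∈ P a ↔ j ≠ a ∧ ρ j = ρ a)
    (K : J → ℕ) (hK : ∀ a, K a = (P a).card + 1)
    (hK2 : ∀ a ∈ I, 2 ≤ K a)
    (L : ℝ)
    (hL : L = ∑ a ∈ I, (1 / (k a : ℝ)) *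
      ∑ j ∈ P a,
        (Real.log (∑ l ∈ Finset.univ.erase a,
            w (ρ a) (ρ l) * Real.exp (⟪z a, z l⟫ / τ))
          - ⟪z a, z j⟫ / τ))
    (Lstar : ℝ)
    (hLstar : Lstar = ∑ a ∈ I, (1 / (k a : ℝ)) * ((K a : ℝ) - 1) *
      Real.log (((K a : ℝ) - 1) / (mmax - mmin))) :
    Lstar ≤ L := by
  subst hL hLstar
  refine sum_le_sum fun a ha => ?_
  rw [mul_assoc]
  gcongr
  have hPa : (P a).Nonempty := card_pos.mp (by have := hK2 a ha; rw [hK] at this; omega)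
  have hKa : (K a : ℝ) - 1 = #(P a) := by rw [hK]; push_cast; ring
  rw [hKa]
  refine card_mul_log_card_div_le_sum_log_sum_mul_exp_sub hPa
    (fun j hj => mem_erase.mpr ⟨((hP a j).mp hj).1, mem_univ j⟩) (sub_pos.mpr hm)
    (fun l _ => ?_) (fun l hl => ?_) _
  · rw [hw]; have := sub_pos.mpr hm; positivity
  · rw [hw, ((hP a l).mp hl).2, sub_self, abs_zero, add_zero, one_div]

/-- **Lemma 1 (Lower bound for the SupReMix loss).**
For every choice of unit-norm embeddings `z : J → ℝ^d` and every temperature `τ > 0`,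
the SupReMix loss satisfies `L ≥ L*`, where
`L* = Σ_{a ∈ I} (1/k_a)·(K_a − 1)·log((K_a − 1)/(m_max − m_min))`. -/
theorem supremix_lower_bound
    {J : Type*} [Fintype J] [DecidableEq J] {d : ℕ}
    (I : Finset J) (hI : I.Nonempty)
    (ρ : J → ℝ) (mmin mmax : ℝ) (hm : mmin < mmax)
    (τ : ℝ) (hτ : 0 < τ)
    (z : J → EuclideanSpace ℝ (Fin d)) (hz : ∀ b, ‖z b‖ = 1)
    (w : ℝ → ℝ → ℝ) (hw : ∀ m mbar, w m mbar = (1 + |m - mbar|) / (mmax - mmin))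
    (k : J → ℕ) (hk : ∀ a, k a = (I.filter (fun b => ρ b = ρ a)).card)
    (P : J → Finset J) (hP : ∀ a j, j ∈ P a ↔ j ≠ a ∧ ρ j = ρ a)
    (K : J → ℕ) (hK : ∀ a, K a = (P a).card + 1)
    (hK2 : ∀ a ∈ I, 2 ≤ K a)
    (L : ℝ)
    (hL : L = ∑ a ∈ I, (1 / (k a : ℝ)) *
      ∑ j ∈ P a,
        (Real.log (∑ l ∈ Finset.univ.erase a,
            w (ρ a) (ρ l) * Real.exp (⟪z a, z l⟫ / τ))
          - ⟪z a, z j⟫ / τ))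
    (Lstar : ℝ)
    (hLstar : Lstar = ∑ a ∈ I, (1 / (k a : ℝ)) * ((K a : ℝ) - 1) *
      Real.log (((K a : ℝ) - 1) / (mmax - mmin))) :
    Lstar ≤ L :=
  supremix_lower_bound_general I ρ mmin mmax hm τ z w hw k P hP K hK hK2 L hL Lstar hLstar
end

section
/- (Quantitative upper bound from the proof of Theorem 2.) Suppose in addition that there is a real number c < 1 such that for every anchor a ∈ I: ⟨z(a), z(j)⟩ = 1 for every positive pair j ∈ P_a, and ⟨z(a), z(l)⟩ ≤ c for every l ∈ J with l ≠ a and ρ(l) ≠ ρ(a). Then L ≤ L* + Σ_{a ∈ I} (1/k_a)·(K_a − 1)·log( 1 + (m_max − m_min)·W_a·exp((c − 1)/τ)/(K_a − 1) ), where W_a = Σ_{l ∈ J, ρ(l) ≠ ρ(a)} w(ρ(a), ρ(l)). -/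
open scoped Classical BigOperators RealInnerProductSpace

/-!
Fix an anchor. Every positive pair contributes weight `1/(m_max - m_min)` and similarity `1`,
and every negative one similarity at most `c`, so the denominator of the anchor's loss term is at
most `(K-1)/(m_max - m_min) · e^{1/τ} + W e^{c/τ}`. Factoring out the positive part and taking
logarithms, `log(denominator) - 1/τ ≤ log((K-1)/(m_max - m_min)) + log(1 + (m_max - m_min) W
e^{(c-1)/τ}/(K-1))`; summing over the `K-1` positive pairs and the anchors gives the bound.
-/

open Finset Real

section ContrastiveDenominator

variable {ι : Type*} (P N : Finset ι) (w s : ι → ℝ) {τ M c : ℝ}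

theorem sum_weighted_exp_le_mul_one_add (hτ : 0 < τ) (hM : 0 < M) (hP : P.Nonempty)
    (hwP : ∀ j ∈ P, w j = 1 / M) (hsP : ∀ j ∈ P, s j = 1)
    (hwN : ∀ l ∈ N, 0 ≤ w l) (hsN : ∀ l ∈ N, s l ≤ c) :
    ∑ l ∈ P, w l * exp (s l / τ) + ∑ l ∈ N, w l * exp (s l / τ) ≤
      (#P / M) * exp (1 / τ) * (1 + M * (∑ l ∈ N, w l) * exp ((c - 1) / τ) / #P) := by
  have hpos : ∑ l ∈ P, w l * exp (s l / τ) = #P / M * exp (1 / τ) := by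
    rw [sum_congr rfl fun j hj => by rw [hwP j hj, hsP j hj], sum_const, nsmul_eq_mul]
    ring
  have hneg : ∑ l ∈ N, w l * exp (s l / τ) ≤ (∑ l ∈ N, w l) * exp (c / τ) := by
    rw [sum_mul]
    gcongr with l hl
    · exact hwN l hl
    · exact hsN l hl
  have hcard : (#P : ℝ) ≠ 0 := by exact_mod_cast hP.card_pos.ne'
  have hexp : exp (c / τ) = exp (1 / τ) * exp ((c - 1) / τ) := by
    rw [← exp_add]
    ring_nf
  calc ∑ l ∈ P, w l * exp (s l / τ) + ∑ l ∈ N, w l * exp (s l / τ)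
      ≤ #P / M * exp (1 / τ) + (∑ l ∈ N, w l) * exp (c / τ) := by rw [hpos]; gcongr
    _ = (#P / M) * exp (1 / τ) * (1 + M * (∑ l ∈ N, w l) * exp ((c - 1) / τ) / #P) := by
      rw [hexp]
      field_simp

theorem log_sum_weighted_exp_sub_le (hτ : 0 < τ) (hM : 0 < M) (hP : P.Nonempty)
    (hwP : ∀ j ∈ P, w j = 1 / M) (hsP : ∀ j ∈ P, s j = 1)
    (hwN : ∀ l ∈ N, 0 ≤ w l) (hsN : ∀ l ∈ N, s l ≤ c) :
    log (∑ l ∈ P, w l * exp (s l / τ) + ∑ l ∈ N, w l * exp (s l / τ)) - 1 / τ ≤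
      log (#P / M) + log (1 + M * (∑ l ∈ N, w l) * exp ((c - 1) / τ) / #P) := by
  have hcard : (0 : ℝ) < #P := by exact_mod_cast hP.card_pos
  have hpos : 0 < ∑ l ∈ P, w l * exp (s l / τ) := by
    refine sum_pos (fun j hj => ?_) hP
    rw [hwP j hj]
    positivity
  have hneg : 0 ≤ ∑ l ∈ N, w l * exp (s l / τ) :=
    sum_nonneg fun l hl => mul_nonneg (hwN l hl) (exp_pos _).le
  have hfactor : 0 < 1 + M * (∑ l ∈ N, w l) * exp ((c - 1) / τ) / #P := by
    have := sum_nonneg hwN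
    positivity
  calc log (∑ l ∈ P, w l * exp (s l / τ) + ∑ l ∈ N, w l * exp (s l / τ)) - 1 / τ
      ≤ log ((#P / M) * exp (1 / τ) *
          (1 + M * (∑ l ∈ N, w l) * exp ((c - 1) / τ) / #P)) - 1 / τ := by
        refine sub_le_sub_right (log_le_log (add_pos_of_pos_of_nonneg hpos hneg) ?_) _
        exact sum_weighted_exp_le_mul_one_add P N w s hτ hM hP hwP hsP hwN hsN
    _ = log (#P / M) + log (1 + M * (∑ l ∈ N, w l) * exp ((c - 1) / τ) / #P) := by
        rw [log_mul (by positivity) hfactor.ne', log_mul (by positivity) (exp_pos _).ne',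
          log_exp]
        ring

theorem sum_log_sum_weighted_exp_sub_le (hτ : 0 < τ) (hM : 0 < M)
    (hwP : ∀ j ∈ P, w j = 1 / M) (hsP : ∀ j ∈ P, s j = 1)
    (hwN : ∀ l ∈ N, 0 ≤ w l) (hsN : ∀ l ∈ N, s l ≤ c) :
    ∑ j ∈ P, (log (∑ l ∈ P, w l * exp (s l / τ) + ∑ l ∈ N, w l * exp (s l / τ)) - s j / τ) ≤
      #P * log (#P / M) + #P * log (1 + M * (∑ l ∈ N, w l) * exp ((c - 1) / τ) / #P) := by
  rcases P.eq_empty_or_nonempty with rfl | hP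
  · simp
  rw [sum_congr rfl fun j hj => by rw [hsP j hj], sum_const, nsmul_eq_mul, ← mul_add]
  gcongr
  exact log_sum_weighted_exp_sub_le P N w s hτ hM hP hwP hsP hwN hsN

end ContrastiveDenominator

theorem sum_erase_eq_sum_filter_eq_add_sum_filter_ne {ι β : Type*} [Fintype ι] [DecidableEq ι]
    (ρ : ι → β) (a : ι) (f : ι → ℝ) :
    ∑ l ∈ univ.erase a, f l =
      ∑ l ∈ (univ.erase a).filter (fun l => ρ l = ρ a), f l +
        ∑ l ∈ univ.filter (fun l => ρ l ≠ ρ a), f l := by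
  rw [← sum_filter_add_sum_filter_not (univ.erase a) (fun l => ρ l = ρ a)]
  congr 2
  ext l
  simp only [mem_filter, mem_erase, mem_univ, and_true, true_and]
  exact ⟨And.right, fun h => ⟨fun hl => h (hl ▸ rfl), h⟩⟩

theorem supremix_quantitative_upper_bound_general
    {J : Type*} [Fintype J] [DecidableEq J] {d : ℕ}
    (I : Finset J)
    (ρ : J → ℝ) (mmin mmax : ℝ) (hm : mmin < mmax)
    (τ : ℝ) (hτ : 0 < τ)
    (z : J → EuclideanSpace ℝ (Fin d))
    (w : ℝ → ℝ → ℝ) (hw : ∀ m mbar, w m mbar = (1 + |m - mbar|) / (mmax - mmin))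
    (k : J → ℕ)
    (P : J → Finset J) (hP : ∀ a j, j ∈ P a ↔ j ≠ a ∧ ρ j = ρ a)
    (K : J → ℕ) (hK : ∀ a, K a = (P a).card + 1)
    (c : ℝ)
    (hpos : ∀ a ∈ I, ∀ j ∈ P a, ⟪z a, z j⟫ = 1)
    (hneg : ∀ a ∈ I, ∀ l : J, l ≠ a → ρ l ≠ ρ a → ⟪z a, z l⟫ ≤ c)
    (W : J → ℝ)
    (hW : ∀ a, W a = ∑ l ∈ Finset.univ.filter (fun l => ρ l ≠ ρ a), w (ρ a) (ρ l))
    (L : ℝ)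
    (hL : L = ∑ a ∈ I, (1 / (k a : ℝ)) *
      ∑ j ∈ P a,
        (Real.log (∑ l ∈ Finset.univ.erase a,
            w (ρ a) (ρ l) * Real.exp (⟪z a, z l⟫ / τ))
          - ⟪z a, z j⟫ / τ))
    (Lstar : ℝ)
    (hLstar : Lstar = ∑ a ∈ I, (1 / (k a : ℝ)) * ((K a : ℝ) - 1) *
      Real.log (((K a : ℝ) - 1) / (mmax - mmin))) :
    L ≤ Lstar + ∑ a ∈ I, (1 / (k a : ℝ)) * ((K a : ℝ) - 1) *
      Real.log (1 + (mmax - mmin) * W a * Real.exp ((c - 1) / τ) / ((K a : ℝ) - 1)) := by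
  have hM : 0 < mmax - mmin := sub_pos.mpr hm
  subst hL hLstar
  rw [← sum_add_distrib]
  refine sum_le_sum fun a ha => ?_
  have hPa : P a = (univ.erase a).filter (fun l => ρ l = ρ a) := by
    ext j
    simp [hP, and_comm]
  have hKP : (K a : ℝ) - 1 = #(P a) := by
    rw [hK a]
    push_cast
    ring
  rw [sum_erase_eq_sum_filter_eq_add_sum_filter_ne ρ a, ← hPa, hKP, hW a, mul_assoc, mul_assoc,
    ← mul_add]
  gcongr
  refine sum_log_sum_weighted_exp_sub_le _ _ _ _ hτ hM (fun j hj => ?_) (hpos a ha)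
    (fun l _ => by rw [hw]; exact div_nonneg (by positivity) hM.le) (fun l hl => ?_)
  · rw [hw, ((hP a j).mp hj).2, sub_self, abs_zero, add_zero]
  · have hρ : ρ l ≠ ρ a := (mem_filter.mp hl).2
    exact hneg a ha l (fun h => hρ (h ▸ rfl)) hρ

/-- **Quantitative upper bound from the proof of Theorem 2.**
Suppose there is `c < 1` such that for every anchor `a ∈ I`: `⟪z a, z j⟫ = 1` for every
positive pair `j ∈ P a`, and `⟪z a, z l⟫ ≤ c` for every `l ≠ a` with `ρ l ≠ ρ a`. Then
`L ≤ L* + Σ_{a ∈ I} (1/k_a)·(K_a − 1)·log(1 + (m_max − m_min)·W_a·exp((c − 1)/τ)/(K_a − 1))`,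
where `W_a = Σ_{l ∈ J, ρ l ≠ ρ a} w (ρ a) (ρ l)`. -/
theorem supremix_quantitative_upper_bound
    {J : Type*} [Fintype J] [DecidableEq J] {d : ℕ}
    (I : Finset J) (hI : I.Nonempty)
    (ρ : J → ℝ) (mmin mmax : ℝ) (hm : mmin < mmax)
    (τ : ℝ) (hτ : 0 < τ)
    (z : J → EuclideanSpace ℝ (Fin d)) (hz : ∀ b, ‖z b‖ = 1)
    (w : ℝ → ℝ → ℝ) (hw : ∀ m mbar, w m mbar = (1 + |m - mbar|) / (mmax - mmin))
    (k : J → ℕ) (hk : ∀ a, k a = (I.filter (fun b => ρ b = ρ a)).card)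
    (P : J → Finset J) (hP : ∀ a j, j ∈ P a ↔ j ≠ a ∧ ρ j = ρ a)
    (K : J → ℕ) (hK : ∀ a, K a = (P a).card + 1)
    (hK2 : ∀ a ∈ I, 2 ≤ K a)
    (c : ℝ) (hc : c < 1)
    (hpos : ∀ a ∈ I, ∀ j ∈ P a, ⟪z a, z j⟫ = 1)
    (hneg : ∀ a ∈ I, ∀ l : J, l ≠ a → ρ l ≠ ρ a → ⟪z a, z l⟫ ≤ c)
    (W : J → ℝ)
    (hW : ∀ a, W a = ∑ l ∈ Finset.univ.filter (fun l => ρ l ≠ ρ a), w (ρ a) (ρ l))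
    (L : ℝ)
    (hL : L = ∑ a ∈ I, (1 / (k a : ℝ)) *
      ∑ j ∈ P a,
        (Real.log (∑ l ∈ Finset.univ.erase a,
            w (ρ a) (ρ l) * Real.exp (⟪z a, z l⟫ / τ))
          - ⟪z a, z j⟫ / τ))
    (Lstar : ℝ)
    (hLstar : Lstar = ∑ a ∈ I, (1 / (k a : ℝ)) * ((K a : ℝ) - 1) *
      Real.log (((K a : ℝ) - 1) / (mmax - mmin))) :
    L ≤ Lstar + ∑ a ∈ I, (1 / (k a : ℝ)) * ((K a : ℝ) - 1) *
      Real.log (1 + (mmax - mmin) * W a * Real.exp ((c - 1) / τ) / ((K a : ℝ) - 1)) :=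
  supremix_quantitative_upper_bound_general I ρ mmin mmax hm τ hτ z w hw k P hP K hK c hpos hneg W
    hW L hL Lstar hLstar
end

section
/- (Small-temperature attainment of the lower bound, from the proof of Theorem 2.) Suppose the embeddings z are fixed independently of τ and there is a real number c < 1 such that for every anchor a ∈ I: ⟨z(a), z(j)⟩ = 1 for every positive pair j ∈ P_a, and ⟨z(a), z(l)⟩ ≤ c for every l ∈ J with l ≠ a and ρ(l) ≠ ρ(a). Writing L(τ) for the SupReMix loss at temperature τ, one has: (i) L(τ) → L* as τ → 0⁺, and (ii) the infimum of L(τ) over all τ > 0 equals L*. -/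
/-!
Every positive pair of an anchor `a` has similarity exactly `1`, so multiplying the partition
function of `a` by `exp (-1 / τ)` turns it into `(K a - 1) / (mmax - mmin)` plus a tail of terms
`w * exp ((⟪z a, z l⟫ - 1) / τ)` over the negatives. This tail is nonnegative and, since every
negative similarity is at most `c < 1`, it tends to `0` as `τ → 0⁺`. Hence each anchor contributes
`(K a - 1) / k a * log ((K a - 1) / (mmax - mmin) + tail)`, which is at least its value at
tail `0` and converges to it: the loss stays above `L*` and tends to it.
-/

open scoped Classical BigOperators RealInnerProductSpace

open Filter Topology Finset Real

theorem isGLB_image_of_tendsto {α β : Type*} [Preorder β] [TopologicalSpace β]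
    [ClosedIciTopology β] {f : α → β} {s : Set α} {l : Filter α} [l.NeBot] {b : β}
    (hs : s ∈ l) (hle : ∀ x ∈ s, b ≤ f x) (hf : Tendsto f l (𝓝 b)) : IsGLB (f '' s) b :=
  ⟨Set.forall_mem_image.2 hle, fun _ hb =>
    ge_of_tendsto hf (mem_of_superset hs fun x hx => hb ⟨x, hx, rfl⟩)⟩

theorem tendsto_exp_div_nhdsGT_zero {x : ℝ} (hx : x < 0) :
    Tendsto (fun τ => exp (x / τ)) (𝓝[>] 0) (𝓝 0) := by
  have hdiv : Tendsto (fun τ : ℝ => x / τ) (𝓝[>] 0) atBot := by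
    simp_rw [div_eq_mul_inv]
    exact (tendsto_const_mul_atBot_of_neg hx).2 tendsto_inv_nhdsGT_zero
  exact tendsto_exp_atBot.comp hdiv

section WeightedLogSum

variable {ι α : Type*} (s : Finset ι) (c D : ι → ℝ) (h : ι → α → ℝ)

theorem tendsto_sum_mul_log_add {l : Filter α} (hD : ∀ i ∈ s, 0 < D i)
    (hh : ∀ i ∈ s, Tendsto (h i) l (𝓝 0)) :
    Tendsto (fun x => ∑ i ∈ s, c i * log (D i + h i x)) l
      (𝓝 (∑ i ∈ s, c i * log (D i))) := by
  refine tendsto_finsetSum _ fun i hi => ?_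
  have hlog := ((hh i hi).const_add (D i)).log (by simpa using (hD i hi).ne')
  simpa using hlog.const_mul (c i)

theorem sum_mul_log_le_sum_mul_log_add (hc : ∀ i ∈ s, 0 ≤ c i) (hD : ∀ i ∈ s, 0 < D i)
    {x : α} (hh : ∀ i ∈ s, 0 ≤ h i x) :
    ∑ i ∈ s, c i * log (D i) ≤ ∑ i ∈ s, c i * log (D i + h i x) :=
  sum_le_sum fun i hi =>
    mul_le_mul_of_nonneg_left (log_le_log (hD i hi) (le_add_of_nonneg_right (hh i hi))) (hc i hi)

end WeightedLogSum

namespace SupReMix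

variable {J : Type*} [Fintype J] [DecidableEq J] {E : Type*} [NormedAddCommGroup E]
  [InnerProductSpace ℝ E] (ρ : J → ℝ) (z : J → E) (w : ℝ → ℝ → ℝ)

noncomputable def negativeTail (a : J) (τ : ℝ) : ℝ :=
  ∑ l ∈ univ.erase a with ρ l ≠ ρ a, w (ρ a) (ρ l) * exp ((⟪z a, z l⟫ - 1) / τ)

variable {ρ z w}

theorem negativeTail_nonneg (hw : ∀ m m', 0 ≤ w m m') (a : J) (τ : ℝ) :
    0 ≤ negativeTail ρ z w a τ :=
  sum_nonneg fun _ _ => mul_nonneg (hw _ _) (exp_pos _).le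

theorem tendsto_negativeTail {a : J} (hneg : ∀ l, l ≠ a → ρ l ≠ ρ a → ⟪z a, z l⟫ < 1) :
    Tendsto (negativeTail ρ z w a) (𝓝[>] 0) (𝓝 0) := by
  have hsum : Tendsto (negativeTail ρ z w a) (𝓝[>] 0)
      (𝓝 (∑ l ∈ univ.erase a with ρ l ≠ ρ a, w (ρ a) (ρ l) * 0)) :=
    tendsto_finsetSum _ fun l hl =>
      (tendsto_exp_div_nhdsGT_zero (x := ⟪z a, z l⟫ - 1) (by
        simp only [mem_filter, mem_erase] at hl
        linarith [hneg l hl.1.1 hl.2])).const_mul (w (ρ a) (ρ l))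
  simpa only [mul_zero, sum_const_zero] using hsum

variable {a : J} {P : Finset J}

theorem log_sum_sub_inv_eq (hP : ∀ j, j ∈ P ↔ j ≠ a ∧ ρ j = ρ a)
    (hpos : ∀ j ∈ P, ⟪z a, z j⟫ = 1) (hw : ∀ m m', 0 ≤ w m m') (hwa : 0 < w (ρ a) (ρ a))
    (hPne : P.Nonempty) (τ : ℝ) :
    log (∑ l ∈ univ.erase a, w (ρ a) (ρ l) * exp (⟪z a, z l⟫ / τ)) - 1 / τ =
      log (#P * w (ρ a) (ρ a) + negativeTail ρ z w a τ) := by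
  have hPeq : P = {l ∈ univ.erase a | ρ l = ρ a} := by
    ext l
    simp [hP, and_comm]
  have hsplit : ∑ l ∈ univ.erase a, w (ρ a) (ρ l) * exp (⟪z a, z l⟫ / τ) =
      exp (1 / τ) * (#P * w (ρ a) (ρ a) + negativeTail ρ z w a τ) := by
    rw [mul_add, negativeTail, mul_sum, ← sum_filter_add_sum_filter_not _ (ρ · = ρ a), ← hPeq]
    congr 1
    · calc ∑ j ∈ P, w (ρ a) (ρ j) * exp (⟪z a, z j⟫ / τ)
          = ∑ _j ∈ P, exp (1 / τ) * w (ρ a) (ρ a) :=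
            sum_congr rfl fun j hj => by rw [hpos j hj, ((hP j).1 hj).2]; ring
        _ = exp (1 / τ) * (#P * w (ρ a) (ρ a)) := by rw [sum_const, nsmul_eq_mul]; ring
    · refine sum_congr rfl fun l _ => ?_
      rw [mul_left_comm, ← exp_add]
      ring_nf
  have hpos' : 0 < #P * w (ρ a) (ρ a) + negativeTail ρ z w a τ :=
    add_pos_of_pos_of_nonneg (mul_pos (Nat.cast_pos.2 hPne.card_pos) hwa)
      (negativeTail_nonneg hw a τ)
  rw [hsplit, log_mul (exp_pos _).ne' hpos'.ne', log_exp]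
  ring

theorem sum_log_sub_eq (hP : ∀ j, j ∈ P ↔ j ≠ a ∧ ρ j = ρ a)
    (hpos : ∀ j ∈ P, ⟪z a, z j⟫ = 1) (hw : ∀ m m', 0 ≤ w m m') (hwa : 0 < w (ρ a) (ρ a))
    (hPne : P.Nonempty) (τ : ℝ) :
    ∑ j ∈ P, (log (∑ l ∈ univ.erase a, w (ρ a) (ρ l) * exp (⟪z a, z l⟫ / τ)) -
        ⟪z a, z j⟫ / τ) =
      #P * log (#P * w (ρ a) (ρ a) + negativeTail ρ z w a τ) := by
  rw [← log_sum_sub_inv_eq hP hpos hw hwa hPne, ← nsmul_eq_mul, ← sum_const]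
  exact sum_congr rfl fun j hj => by rw [hpos j hj]

end SupReMix

open SupReMix

theorem supremix_small_temperature_infimum_general
    {J : Type*} [Fintype J] [DecidableEq J] {d : ℕ}
    (I : Finset J)
    (ρ : J → ℝ) (mmin mmax : ℝ) (hm : mmin < mmax)
    (z : J → EuclideanSpace ℝ (Fin d))
    (w : ℝ → ℝ → ℝ) (hw : ∀ m mbar, w m mbar = (1 + |m - mbar|) / (mmax - mmin))
    (k : J → ℕ)
    (P : J → Finset J) (hP : ∀ a j, j ∈ P a ↔ j ≠ a ∧ ρ j = ρ a)
    (K : J → ℕ) (hK : ∀ a, K a = (P a).card + 1)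
    (hK2 : ∀ a ∈ I, 2 ≤ K a)
    (c : ℝ) (hc : c < 1)
    (hpos : ∀ a ∈ I, ∀ j ∈ P a, ⟪z a, z j⟫ = 1)
    (hneg : ∀ a ∈ I, ∀ l : J, l ≠ a → ρ l ≠ ρ a → ⟪z a, z l⟫ ≤ c)
    (L : ℝ → ℝ)
    (hL : ∀ τ : ℝ, 0 < τ → L τ = ∑ a ∈ I, (1 / (k a : ℝ)) *
      ∑ j ∈ P a,
        (Real.log (∑ l ∈ Finset.univ.erase a,
            w (ρ a) (ρ l) * Real.exp (⟪z a, z l⟫ / τ))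
          - ⟪z a, z j⟫ / τ))
    (Lstar : ℝ)
    (hLstar : Lstar = ∑ a ∈ I, (1 / (k a : ℝ)) * ((K a : ℝ) - 1) *
      Real.log (((K a : ℝ) - 1) / (mmax - mmin))) :
    Filter.Tendsto L (nhdsWithin 0 (Set.Ioi 0)) (nhds Lstar) ∧
    IsGLB (L '' Set.Ioi 0) Lstar := by
  have hM : 0 < mmax - mmin := sub_pos.2 hm
  have hw0 : ∀ m m', 0 ≤ w m m' := fun m m' => by rw [hw]; positivity
  have hwd : ∀ a, w (ρ a) (ρ a) = 1 / (mmax - mmin) := fun a => by simp [hw]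
  have hPne : ∀ a ∈ I, (P a).Nonempty := fun a ha =>
    card_pos.1 (by have := hK2 a ha; have := hK a; omega)
  have hD : ∀ a ∈ I, 0 < (#(P a) : ℝ) * w (ρ a) (ρ a) := fun a ha => by
    rw [hwd]; exact mul_pos (Nat.cast_pos.2 (hPne a ha).card_pos) (by positivity)
  have hLtail : ∀ τ, 0 < τ → L τ = ∑ a ∈ I, 1 / (k a : ℝ) * #(P a) *
      log (#(P a) * w (ρ a) (ρ a) + negativeTail ρ z w a τ) := fun τ hτ => by
    rw [hL τ hτ]
    refine sum_congr rfl fun a ha => ?_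
    rw [sum_log_sub_eq (hP a) (hpos a ha) hw0 (hwd a ▸ one_div_pos.2 hM) (hPne a ha), mul_assoc]
  have hLstar' : Lstar = ∑ a ∈ I, 1 / (k a : ℝ) * #(P a) * log (#(P a) * w (ρ a) (ρ a)) := by
    simp only [hLstar, hK, hwd, Nat.cast_add, Nat.cast_one, add_sub_cancel_right, mul_one_div]
  have hlim : Tendsto L (𝓝[>] 0) (𝓝 Lstar) := by
    rw [hLstar']
    refine (tendsto_sum_mul_log_add I _ _ _ hD fun a ha => tendsto_negativeTail (w := w)
      fun l hla hρ => (hneg a ha l hla hρ).trans_lt hc).congr' ?_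
    filter_upwards [self_mem_nhdsWithin] with τ hτ using (hLtail τ hτ).symm
  refine ⟨hlim, isGLB_image_of_tendsto self_mem_nhdsWithin (fun τ hτ => ?_) hlim⟩
  rw [hLtail τ hτ, hLstar']
  exact sum_mul_log_le_sum_mul_log_add I _ _ _ (fun a _ => by positivity) hD
    fun a _ => negativeTail_nonneg hw0 a τ

/-- **Small-temperature attainment of the lower bound (from the proof of Theorem 2).**
Suppose the unit-norm embeddings `z` are fixed and there is `c < 1` such that for every anchor
`a ∈ I`: `⟪z a, z j⟫ = 1` for every positive pair `j ∈ P a`, and `⟪z a, z l⟫ ≤ c` for every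
`l ≠ a` with `ρ l ≠ ρ a`. Writing `L τ` for the SupReMix loss at temperature `τ`, one has:
(i) `L τ → L*` as `τ → 0⁺`, and (ii) the infimum of `L τ` over all `τ > 0` equals `L*`. -/
theorem supremix_small_temperature_infimum
    {J : Type*} [Fintype J] [DecidableEq J] {d : ℕ}
    (I : Finset J) (hI : I.Nonempty)
    (ρ : J → ℝ) (mmin mmax : ℝ) (hm : mmin < mmax)
    (z : J → EuclideanSpace ℝ (Fin d)) (hz : ∀ b, ‖z b‖ = 1)
    (w : ℝ → ℝ → ℝ) (hw : ∀ m mbar, w m mbar = (1 + |m - mbar|) / (mmax - mmin))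
    (k : J → ℕ) (hk : ∀ a, k a = (I.filter (fun b => ρ b = ρ a)).card)
    (P : J → Finset J) (hP : ∀ a j, j ∈ P a ↔ j ≠ a ∧ ρ j = ρ a)
    (K : J → ℕ) (hK : ∀ a, K a = (P a).card + 1)
    (hK2 : ∀ a ∈ I, 2 ≤ K a)
    (c : ℝ) (hc : c < 1)
    (hpos : ∀ a ∈ I, ∀ j ∈ P a, ⟪z a, z j⟫ = 1)
    (hneg : ∀ a ∈ I, ∀ l : J, l ≠ a → ρ l ≠ ρ a → ⟪z a, z l⟫ ≤ c)
    (L : ℝ → ℝ)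
    (hL : ∀ τ : ℝ, 0 < τ → L τ = ∑ a ∈ I, (1 / (k a : ℝ)) *
      ∑ j ∈ P a,
        (Real.log (∑ l ∈ Finset.univ.erase a,
            w (ρ a) (ρ l) * Real.exp (⟪z a, z l⟫ / τ))
          - ⟪z a, z j⟫ / τ))
    (Lstar : ℝ)
    (hLstar : Lstar = ∑ a ∈ I, (1 / (k a : ℝ)) * ((K a : ℝ) - 1) *
      Real.log (((K a : ℝ) - 1) / (mmax - mmin))) :
    Filter.Tendsto L (nhdsWithin 0 (Set.Ioi 0)) (nhds Lstar) ∧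
    IsGLB (L '' Set.Ioi 0) Lstar :=
  supremix_small_temperature_infimum_general I ρ mmin mmax hm z w hw k P hP K hK hK2 c hc hpos hneg
    L hL Lstar hLstar
end

section
/- (Theorem 2 — L* is the infimum of the SupReMix loss.) Let d ≥ 2. Then the infimum of the SupReMix loss L(z, τ), taken over all embeddings z : J → ℝ^d with ‖z(b)‖ = 1 for every b ∈ J and all temperatures τ > 0, equals L*. In particular L(z, τ) ≥ L* for every such (z, τ), and for every ε > 0 there exist unit-norm embeddings z and a temperature τ > 0 with L(z, τ) < L* + ε. -/
open scoped Classical BigOperators RealInnerProductSpace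

/-!
For each anchor the weights of the positives all equal `1 / (m_max - m_min)`, and the other
weights are positive, so Jensen's inequality for `exp` bounds the anchor's term from below by
`n log (n / (m_max - m_min))`, where `n` is the number of positives. The bound is approached
by embeddings that send equal labels to equal unit vectors and distinct labels to distinct
ones, as `τ → 0⁺`: all similarities to non-positives are then `< 1`, and their contributions
to the normalising sum vanish in the limit. Such embeddings exist because `d ≥ 2`: the real
line embeds injectively into the unit circle, e.g. by `r ↦ (cos (arctan r), sin (arctan r))`.
-/

open Real Filter Topology Finset

theorem card_mul_exp_sum_div_card_le_sum_exp {ι : Type*} {s : Finset ι} (hs : s.Nonempty)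
    (x : ι → ℝ) : #s * exp ((∑ i ∈ s, x i) / #s) ≤ ∑ i ∈ s, exp (x i) := by
  have hn : (0 : ℝ) < #s := by exact_mod_cast hs.card_pos
  have jensen := convexOn_exp.map_sum_le (t := s) (w := fun _ => (#s : ℝ)⁻¹) (p := x)
    (fun _ _ => by positivity) (by simp [hn.ne']) (fun _ _ => Set.mem_univ _)
  simp only [smul_eq_mul, ← mul_sum] at jensen
  rw [div_eq_inv_mul]
  calc (#s : ℝ) * exp ((#s : ℝ)⁻¹ * ∑ i ∈ s, x i)
      ≤ #s * ((#s : ℝ)⁻¹ * ∑ i ∈ s, exp (x i)) := by gcongr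
    _ = ∑ i ∈ s, exp (x i) := by field_simp

theorem card_mul_log_card_mul_le_sum_log_sub {ι : Type*} (s : Finset ι) (x : ι → ℝ)
    {A c : ℝ} (hc : 0 < c) (hA : c * ∑ i ∈ s, exp (x i) ≤ A) :
    #s * log (#s * c) ≤ ∑ i ∈ s, (log A - x i) := by
  rcases s.eq_empty_or_nonempty with rfl | hs
  · simp
  have hn : (0 : ℝ) < #s := by exact_mod_cast hs.card_pos
  set S := ∑ i ∈ s, x i
  have hA' : #s * c * exp (S / #s) ≤ A :=
    calc #s * c * exp (S / #s) = c * (#s * exp (S / #s)) := by ring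
      _ ≤ c * ∑ i ∈ s, exp (x i) := by gcongr; exact card_mul_exp_sum_div_card_le_sum_exp hs x
      _ ≤ A := hA
  have hlog : log (#s * c) + S / #s ≤ log A := by
    have := log_le_log (by positivity) hA'
    rwa [log_mul (by positivity) (exp_pos _).ne', log_exp] at this
  rw [sum_sub_distrib, sum_const, nsmul_eq_mul]
  calc #s * log (#s * c) = #s * (log (#s * c) + S / #s) - S := by field_simp; ring
    _ ≤ #s * log A - S := by gcongr

theorem tendsto_log_sum_mul_exp_mul_sub {ι : Type*} (t : Finset ι) (W y : ι → ℝ)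
    (hW : ∀ l ∈ t, 0 < W l) (hy : ∀ l ∈ t, y l ≤ 1) (hy₁ : ∃ l ∈ t, y l = 1) :
    Tendsto (fun r => log (∑ l ∈ t, W l * exp (y l * r)) - r) atTop
      (𝓝 (log (∑ l ∈ t with y l = 1, W l))) := by
  obtain ⟨l₁, hl₁, hyl₁⟩ := hy₁
  have hshift : ∀ r, log (∑ l ∈ t, W l * exp (y l * r)) - r
      = log (∑ l ∈ t, W l * exp ((y l - 1) * r)) := by
    intro r
    have hpos : 0 < ∑ l ∈ t, W l * exp (y l * r) :=
      sum_pos (fun l hl => mul_pos (hW l hl) (exp_pos _)) ⟨l₁, hl₁⟩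
    have : ∑ l ∈ t, W l * exp ((y l - 1) * r) = (∑ l ∈ t, W l * exp (y l * r)) * exp (-r) := by
      rw [sum_mul]
      refine sum_congr rfl fun l _ => ?_
      rw [mul_assoc, ← exp_add]
      ring_nf
    rw [this, log_mul hpos.ne' (exp_pos _).ne', log_exp, sub_eq_add_neg]
  simp_rw [hshift]
  refine Tendsto.log ?_ (sum_pos (fun l hl => hW l (mem_filter.1 hl).1)
    ⟨l₁, mem_filter.2 ⟨hl₁, hyl₁⟩⟩).ne'
  rw [sum_filter]
  refine tendsto_finsetSum t fun l hl => ?_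
  split_ifs with hyl
  · simp [hyl]
  · have hneg : y l - 1 < 0 := by linarith [lt_of_le_of_ne (hy l hl) hyl]
    simpa using (tendsto_exp_atBot.comp (tendsto_id.const_mul_atTop_of_neg hneg)).const_mul (W l)

/-- One anchor's term of the SupReMix loss: positives `s`, contrast set `t`, weights `W` and
similarities `y` to the anchor. -/
noncomputable def weightedContrastiveLoss {ι : Type*} (s t : Finset ι) (W y : ι → ℝ) (τ : ℝ) : ℝ :=
  ∑ j ∈ s, (log (∑ l ∈ t, W l * exp (y l / τ)) - y j / τ)

section WeightedContrastiveLoss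

variable {ι : Type*} {s t : Finset ι} {W y : ι → ℝ} {c : ℝ}

theorem card_mul_log_card_mul_le_weightedContrastiveLoss (hst : s ⊆ t) (hc : 0 < c)
    (hW : ∀ l ∈ t, 0 ≤ W l) (hWs : ∀ j ∈ s, W j = c) (τ : ℝ) :
    #s * log (#s * c) ≤ weightedContrastiveLoss s t W y τ := by
  refine card_mul_log_card_mul_le_sum_log_sub s _ hc ?_
  calc c * ∑ j ∈ s, exp (y j / τ) = ∑ j ∈ s, W j * exp (y j / τ) := by
        rw [mul_sum]; exact sum_congr rfl fun j hj => by rw [hWs j hj]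
    _ ≤ ∑ l ∈ t, W l * exp (y l / τ) :=
        sum_le_sum_of_subset_of_nonneg hst fun l hl _ => mul_nonneg (hW l hl) (exp_pos _).le

theorem tendsto_weightedContrastiveLoss (hst : s ⊆ t) (hW : ∀ l ∈ t, 0 < W l)
    (hWs : ∀ j ∈ s, W j = c) (hy : ∀ l ∈ t, y l ≤ 1) (hys : ∀ l ∈ t, y l = 1 ↔ l ∈ s) :
    Tendsto (weightedContrastiveLoss s t W y) (𝓝[>] 0) (𝓝 (#s * log (#s * c))) := by
  have hfilter : t.filter (y · = 1) = s := by
    ext l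
    simp only [mem_filter]
    exact ⟨fun h => (hys l h.1).1 h.2, fun h => ⟨hst h, (hys l (hst h)).2 h⟩⟩
  have hlimit : ∑ l ∈ t with y l = 1, W l = #s * c := by
    rw [hfilter, sum_congr rfl hWs, sum_const, nsmul_eq_mul]
  rw [← hlimit, ← nsmul_eq_mul, ← sum_const]
  refine tendsto_finsetSum s fun j hj => ?_
  have hyj : y j = 1 := (hys j (hst hj)).2 hj
  have hanchor := (tendsto_log_sum_mul_exp_mul_sub t W y hW hy ⟨j, hst hj, hyj⟩).comp
    tendsto_inv_nhdsGT_zero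
  simpa only [Function.comp_def, div_eq_mul_inv, hyj, one_mul] using hanchor

end WeightedContrastiveLoss

theorem exists_injective_norm_eq_one_of_orthonormal {E : Type*} [NormedAddCommGroup E]
    [InnerProductSpace ℝ E] {u v : E} (hu : ‖u‖ = 1) (hv : ‖v‖ = 1) (huv : ⟪u, v⟫ = 0) :
    ∃ e : ℝ → E, Function.Injective e ∧ ∀ r, ‖e r‖ = 1 := by
  set e : ℝ → E := fun r => cos (arctan r) • u + sin (arctan r) • v
  have hinner_u : ∀ r, ⟪e r, u⟫ = cos (arctan r) := by
    intro r
    simp [e, inner_add_left, real_inner_smul_left, hu, real_inner_comm u v, huv]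
  have hinner_v : ∀ r, ⟪e r, v⟫ = sin (arctan r) := by
    intro r
    simp [e, inner_add_left, real_inner_smul_left, hv, huv]
  refine ⟨e, Function.LeftInverse.injective (g := fun x => ⟪x, v⟫ / ⟪x, u⟫) fun r => ?_, ?_⟩
  · simp only [hinner_u, hinner_v, ← tan_eq_sin_div_cos, tan_arctan]
  · intro r
    have hsq : ‖e r‖ ^ 2 = 1 :=
      calc ‖e r‖ ^ 2 = ⟪cos (arctan r) • u + sin (arctan r) • v, e r⟫ :=
            (real_inner_self_eq_norm_sq _).symm
        _ = cos (arctan r) * ⟪e r, u⟫ + sin (arctan r) * ⟪e r, v⟫ := by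
            rw [inner_add_left, real_inner_smul_left, real_inner_smul_left, real_inner_comm u,
              real_inner_comm v]
        _ = 1 := by rw [hinner_u, hinner_v]; linear_combination cos_sq_add_sin_sq (arctan r)
    exact (pow_eq_one_iff_of_nonneg (norm_nonneg _) two_ne_zero).1 hsq

theorem EuclideanSpace.exists_injective_norm_eq_one {d : ℕ} (hd : 2 ≤ d) :
    ∃ e : ℝ → EuclideanSpace ℝ (Fin d), Function.Injective e ∧ ∀ r, ‖e r‖ = 1 := by
  refine exists_injective_norm_eq_one_of_orthonormal (u := EuclideanSpace.single ⟨0, by omega⟩ 1)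
    (v := EuclideanSpace.single ⟨1, by omega⟩ 1) (by simp) (by simp) ?_
  simp [EuclideanSpace.inner_single_left]

theorem supremix_infimum_general
    {J : Type*} [Fintype J] [DecidableEq J] {d : ℕ} (hd : 2 ≤ d)
    (I : Finset J)
    (ρ : J → ℝ) (mmin mmax : ℝ) (hm : mmin < mmax)
    (w : ℝ → ℝ → ℝ) (hw : ∀ m mbar, w m mbar = (1 + |m - mbar|) / (mmax - mmin))
    (k : J → ℕ)
    (P : J → Finset J) (hP : ∀ a j, j ∈ P a ↔ j ≠ a ∧ ρ j = ρ a)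
    (K : J → ℕ) (hK : ∀ a, K a = (P a).card + 1)
    (L : (J → EuclideanSpace ℝ (Fin d)) → ℝ → ℝ)
    (hL : ∀ (z : J → EuclideanSpace ℝ (Fin d)) (τ : ℝ),
      L z τ = ∑ a ∈ I, (1 / (k a : ℝ)) *
        ∑ j ∈ P a,
          (Real.log (∑ l ∈ Finset.univ.erase a,
              w (ρ a) (ρ l) * Real.exp (⟪z a, z l⟫ / τ))
            - ⟪z a, z j⟫ / τ))
    (Lstar : ℝ)
    (hLstar : Lstar = ∑ a ∈ I, (1 / (k a : ℝ)) * ((K a : ℝ) - 1) *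
      Real.log (((K a : ℝ) - 1) / (mmax - mmin))) :
    IsGLB {x : ℝ | ∃ (z : J → EuclideanSpace ℝ (Fin d)) (τ : ℝ),
        (∀ b, ‖z b‖ = 1) ∧ 0 < τ ∧ L z τ = x} Lstar ∧
    (∀ (z : J → EuclideanSpace ℝ (Fin d)) (τ : ℝ),
      (∀ b, ‖z b‖ = 1) → 0 < τ → Lstar ≤ L z τ) ∧
    (∀ ε > (0 : ℝ), ∃ (z : J → EuclideanSpace ℝ (Fin d)) (τ : ℝ),
      (∀ b, ‖z b‖ = 1) ∧ 0 < τ ∧ L z τ < Lstar + ε) := by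
  have hPsub : ∀ a, P a ⊆ univ.erase a := fun a j hj => mem_erase.2 ⟨((hP a j).1 hj).1, mem_univ j⟩
  have hw_pos : ∀ a l, 0 < w (ρ a) (ρ l) := fun _ _ => by rw [hw]; positivity
  have hw_P : ∀ a, ∀ j ∈ P a, w (ρ a) (ρ j) = (mmax - mmin)⁻¹ := fun a j hj => by
    rw [hw, ((hP a j).1 hj).2, sub_self, abs_zero, add_zero, one_div]
  have hLstar' : Lstar = ∑ a ∈ I, 1 / (k a : ℝ) * (#(P a) * log (#(P a) * (mmax - mmin)⁻¹)) := by
    rw [hLstar]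
    refine sum_congr rfl fun a _ => ?_
    rw [hK, Nat.cast_add_one, add_sub_cancel_right, mul_assoc, ← div_eq_mul_inv]
  have lower : ∀ z τ, Lstar ≤ L z τ := by
    intro z τ
    rw [hLstar', hL]
    gcongr with a
    exact card_mul_log_card_mul_le_weightedContrastiveLoss (hPsub a) (inv_pos.2 (sub_pos.2 hm))
      (fun l _ => (hw_pos a l).le) (hw_P a) τ
  obtain ⟨e, he_inj, he_norm⟩ := EuclideanSpace.exists_injective_norm_eq_one hd
  have hlim : Tendsto (L (e ∘ ρ)) (𝓝[>] 0) (𝓝 Lstar) := by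
    rw [hLstar', show L (e ∘ ρ) = _ from funext (hL (e ∘ ρ))]
    refine tendsto_finsetSum I fun a _ => Tendsto.const_mul _ ?_
    refine tendsto_weightedContrastiveLoss (hPsub a) (fun l _ => hw_pos a l) (hw_P a)
      (fun l _ => real_inner_le_one_of_norm_eq_one (he_norm _) (he_norm _)) fun l hl => ?_
    rw [Function.comp_apply, Function.comp_apply,
      inner_eq_one_iff_of_norm_eq_one (he_norm _) (he_norm _), he_inj.eq_iff, hP]
    exact ⟨fun h => ⟨ne_of_mem_erase hl, h.symm⟩, fun h => h.2.symm⟩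
  have hglb : IsGLB {x : ℝ | ∃ (z : J → EuclideanSpace ℝ (Fin d)) (τ : ℝ),
      (∀ b, ‖z b‖ = 1) ∧ 0 < τ ∧ L z τ = x} Lstar :=
    isGLB_of_mem_closure (by rintro _ ⟨z, τ, -, -, rfl⟩; exact lower z τ)
      (mem_closure_of_tendsto hlim (eventually_mem_nhdsWithin.mono fun τ hτ =>
        ⟨e ∘ ρ, τ, fun b => he_norm (ρ b), hτ, rfl⟩))
  refine ⟨hglb, fun z τ _ _ => lower z τ, fun ε hε => ?_⟩
  obtain ⟨_, ⟨z, τ, hz, hτ, rfl⟩, -, hlt⟩ := hglb.exists_between (lt_add_of_pos_right Lstar hε)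
  exact ⟨z, τ, hz, hτ, hlt⟩

/-- **Theorem 2 (L* is the infimum of the SupReMix loss).**
Let `d ≥ 2`. The infimum of the SupReMix loss `L z τ`, taken over all embeddings
`z : J → ℝ^d` with `‖z b‖ = 1` for all `b ∈ J` and all temperatures `τ > 0`, equals `L*`.
In particular `L z τ ≥ L*` for every such `(z, τ)`, and for every `ε > 0` there exist
unit-norm embeddings `z` and a temperature `τ > 0` with `L z τ < L* + ε`. -/
theorem supremix_infimum
    {J : Type*} [Fintype J] [DecidableEq J] {d : ℕ} (hd : 2 ≤ d)
    (I : Finset J) (hI : I.Nonempty)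
    (ρ : J → ℝ) (mmin mmax : ℝ) (hm : mmin < mmax)
    (w : ℝ → ℝ → ℝ) (hw : ∀ m mbar, w m mbar = (1 + |m - mbar|) / (mmax - mmin))
    (k : J → ℕ) (hk : ∀ a, k a = (I.filter (fun b => ρ b = ρ a)).card)
    (P : J → Finset J) (hP : ∀ a j, j ∈ P a ↔ j ≠ a ∧ ρ j = ρ a)
    (K : J → ℕ) (hK : ∀ a, K a = (P a).card + 1)
    (hK2 : ∀ a ∈ I, 2 ≤ K a)
    (L : (J → EuclideanSpace ℝ (Fin d)) → ℝ → ℝ)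
    (hL : ∀ (z : J → EuclideanSpace ℝ (Fin d)) (τ : ℝ),
      L z τ = ∑ a ∈ I, (1 / (k a : ℝ)) *
        ∑ j ∈ P a,
          (Real.log (∑ l ∈ Finset.univ.erase a,
              w (ρ a) (ρ l) * Real.exp (⟪z a, z l⟫ / τ))
            - ⟪z a, z j⟫ / τ))
    (Lstar : ℝ)
    (hLstar : Lstar = ∑ a ∈ I, (1 / (k a : ℝ)) * ((K a : ℝ) - 1) *
      Real.log (((K a : ℝ) - 1) / (mmax - mmin))) :
    IsGLB {x : ℝ | ∃ (z : J → EuclideanSpace ℝ (Fin d)) (τ : ℝ),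
        (∀ b, ‖z b‖ = 1) ∧ 0 < τ ∧ L z τ = x} Lstar ∧
    (∀ (z : J → EuclideanSpace ℝ (Fin d)) (τ : ℝ),
      (∀ b, ‖z b‖ = 1) → 0 < τ → Lstar ≤ L z τ) ∧
    (∀ ε > (0 : ℝ), ∃ (z : J → EuclideanSpace ℝ (Fin d)) (τ : ℝ),
      (∀ b, ‖z b‖ = 1) ∧ 0 < τ ∧ L z τ < Lstar + ε) :=
  supremix_infimum_general hd I ρ mmin mmax hm w hw k P hP K hK L hL Lstar hLstar
end
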